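/- arXiv:1405.0678 — 5 statements merged into one kernel-verified Lean document; each statement's English description precedes it below -/
import Mathlib

section
/- Let n, σ, α, λ, D be real numbers satisfying σ ≥ n, α > 0, 0 ≤ λ < 1, 0 ≤ D, D ≤ α, and D ≤ n − λσ. Then D/(1−λ) ≤ σα/(σ−n+α). -/
/-- Arithmetic core of Lemma 2.12: if `σ ≥ n`, `α > 0`, `0 ≤ lam < 1`,
`0 ≤ D ≤ α` and `D ≤ n - lam*σ`, then `D/(1-lam) ≤ σ*α/(σ-n+α)`. -/
theorem stmt0 (n σ α lam D : ℝ)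
    (hσ : n ≤ σ) (hα : 0 < α) (hlam0 : 0 ≤ lam) (hlam1 : lam < 1)
    (hD0 : 0 ≤ D) (hDα : D ≤ α) (hDn : D ≤ n - lam * σ) :
    D / (1 - lam) ≤ σ * α / (σ - n + α) := by
  have h1 : (0:ℝ) < 1 - lam := by linarith
  have h2 : (0:ℝ) < σ - n + α := by linarith
  rw [div_le_div_iff₀ h1 h2]
  rcases le_total α (n - lam * σ) with h | h
  · nlinarith [mul_le_mul_of_nonneg_right hDα h2.le, mul_nonneg hlam0 hα.le]
  · nlinarith [mul_le_mul_of_nonneg_right hDn h2.le, mul_nonneg hlam0 hα.le,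
      sq_nonneg (n - lam * σ - α), mul_nonneg (mul_nonneg hlam0 hlam0) (sq_nonneg σ)]
end

section
/- Let n ≥ 2 be a natural number and let σ, w be real numbers with σ ≥ n and 0 ≤ w < n−1. Set μ = w/(σ(σ−1−w)). Then (w/σ + μ)^n ≤ μ(1+μ)^{n−1}. -/
/-!
Writing `μ = w / (σ (σ - 1 - w))`, one has `w / σ + μ = w (σ - w) / (σ (σ - 1 - w))` and
`1 + μ = (σ - 1)(σ - w) / (σ (σ - 1 - w))`, so with `m = n - 1` the inequality reduces to
`w ^ m (σ - w) ≤ (σ - 1) ^ m`. This follows from Bernoulli's inequality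
`(t / w) ^ m ≥ 1 + m (t - w) / w` for `t = σ - 1`, since `m ≥ w`.
-/

lemma pow_mul_add_one_sub_le_pow {m : ℕ} {w t : ℝ} (hm : m ≠ 0) (hw0 : 0 ≤ w)
    (hwm : w ≤ m) (hwt : w ≤ t) : w ^ m * (t + 1 - w) ≤ t ^ m := by
  rcases hw0.eq_or_lt with rfl | hw
  · rw [zero_pow hm, zero_mul]
    exact pow_nonneg hwt m
  have hq : 0 ≤ (t - w) / w := div_nonneg (sub_nonneg.mpr hwt) hw.le
  calc w ^ m * (t + 1 - w) = w ^ m * (1 + w * ((t - w) / w)) := by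
        rw [mul_div_cancel₀ _ hw.ne']; ring
    _ ≤ w ^ m * (1 + m * ((t - w) / w)) := by gcongr
    _ ≤ w ^ m * (1 + (t - w) / w) ^ m := by
        gcongr
        exact one_add_mul_le_pow (by linarith) m
    _ = t ^ m := by
        rw [← mul_pow, mul_add, mul_div_cancel₀ _ hw.ne']
        ring

theorem stmt4_general (n : ℕ) (σ w : ℝ)
    (hσ : (n : ℝ) ≤ σ) (hw0 : 0 ≤ w) (hw : w < (n : ℝ) - 1) :
    (w / σ + w / (σ * (σ - 1 - w))) ^ n
      ≤ (w / (σ * (σ - 1 - w))) * (1 + w / (σ * (σ - 1 - w))) ^ (n - 1) := by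
  have hn : n ≠ 0 := Nat.cast_ne_zero.mp (show (0 : ℝ) < n by linarith).ne'
  obtain ⟨m, rfl⟩ := Nat.exists_eq_add_one_of_ne_zero hn
  push_cast at hσ hw
  rw [add_sub_cancel_right] at hw
  have hσ0 : σ ≠ 0 := by linarith
  have hd : σ - 1 - w ≠ 0 := by linarith
  have hD : 0 < σ * (σ - 1 - w) := mul_pos (by linarith) (by linarith)
  have hμσ : w / σ + w / (σ * (σ - 1 - w)) = w * (σ - w) / (σ * (σ - 1 - w)) := by
    field_simp; ring
  have hμ1 : 1 + w / (σ * (σ - 1 - w)) = (σ - 1) * (σ - w) / (σ * (σ - 1 - w)) := by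
    field_simp; ring
  have hkey : w ^ m * (σ - w) ≤ (σ - 1) ^ m := by
    have := pow_mul_add_one_sub_le_pow (t := σ - 1) (Nat.cast_ne_zero.mp (hw0.trans_lt hw).ne')
      hw0 hw.le (by linarith)
    rwa [sub_add_cancel] at this
  rw [hμσ, hμ1, Nat.add_sub_cancel, div_pow, div_pow, div_mul_div_comm, ← pow_succ',
    div_le_div_iff_of_pos_right (pow_pos hD _)]
  have hσw : 0 ≤ σ - w := by linarith
  calc (w * (σ - w)) ^ (m + 1) = w * (σ - w) ^ m * (w ^ m * (σ - w)) := by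
        rw [pow_succ, mul_pow]; ring
    _ ≤ w * (σ - w) ^ m * (σ - 1) ^ m := by gcongr
    _ = w * ((σ - 1) * (σ - w)) ^ m := by rw [mul_pow]; ring

/-- Verification of the last assertion of Proposition 3.4: the value
`μ = w/(σ(σ-1-w))` satisfies `(w/σ + μ)^n ≤ μ(1+μ)^(n-1)`. -/
theorem stmt4 (n : ℕ) (hn : 2 ≤ n) (σ w : ℝ)
    (hσ : (n : ℝ) ≤ σ) (hw0 : 0 ≤ w) (hw : w < (n : ℝ) - 1) :
    (w / σ + w / (σ * (σ - 1 - w))) ^ n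
      ≤ (w / (σ * (σ - 1 - w))) * (1 + w / (σ * (σ - 1 - w))) ^ (n - 1) :=
  stmt4_general n σ w hσ hw0 hw
end

section
/- Let n ≥ 2 be a natural number and let σ, w be real numbers with σ ≥ n and 0 ≤ w ≤ n−1. Then w^{n−1}(σ−w) ≤ (σ−1)^{n−1}. -/
/-! Write `σ - 1 = w + d` with `d = σ - 1 - w ≥ 0`. Bernoulli's inequality gives
`(w + d)^p ≥ w^p + p w^(p-1) d`, and since `w ≤ p` this dominates
`w^p + w^(p-1) w d = w^p (σ - w)`. -/

lemma pow_mul_sub_le_sub_one_pow {R : Type*} [CommRing R] [LinearOrder R] [IsStrictOrderedRing R]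
    {p : ℕ} (hp : p ≠ 0) {σ w : R} (hw0 : 0 ≤ w) (hwp : w ≤ p) (hwσ : w ≤ σ - 1) :
    w ^ p * (σ - w) ≤ (σ - 1) ^ p := by
  set d := σ - 1 - w with hd
  have hd0 : 0 ≤ d := sub_nonneg.mpr hwσ
  calc w ^ p * (σ - w) = w ^ p + w ^ (p - 1) * w * d := by
        rw [pow_sub_one_mul hp, hd]; ring
    _ ≤ w ^ p + p * w ^ (p - 1) * d := by
        rw [mul_comm (p : R)]
        gcongr
    _ ≤ (w + d) ^ p := pow_add_mul_le_add_pow hw0 (by positivity) p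
    _ = (σ - 1) ^ p := by rw [hd]; ring

/-- Reduced form of the minimal slope check in Proposition 3.4:
`w^(n-1) (σ - w) ≤ (σ-1)^(n-1)`. -/
theorem stmt5 (n : ℕ) (hn : 2 ≤ n) (σ w : ℝ)
    (hσ : (n : ℝ) ≤ σ) (hw0 : 0 ≤ w) (hw : w ≤ (n : ℝ) - 1) :
    w ^ (n - 1) * (σ - w) ≤ (σ - 1) ^ (n - 1) := by
  have hcast : ((n - 1 : ℕ) : ℝ) = n - 1 := by
    rw [Nat.cast_sub (by omega), Nat.cast_one]
  exact pow_mul_sub_le_sub_one_pow (by omega) hw0 (hcast ▸ hw) (by linarith)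
end

section
/- Let n ≥ 1 be a natural number and let ν, σ, w be real numbers with ν > 0, σ > 0, and w ≥ 0. Set a = (w+νσ)/(1+ν) and b = σ + w/ν. Let φ : ℝ → ℝ be a continuous function such that 0 ≤ φ(t) for all t ∈ [0,b], φ(t) ≤ t for all t ∈ [0,a], and φ(t) ≤ w − ν(t−σ) for all t ∈ [a,b]. Then ∫₀^b n · φ(t)^{n−1} dt ≤ (w+νσ)^n/(ν(1+ν)^{n−1}). -/
/-!
On `[0, a]` the function `φ` lies below the diagonal and on `[a, b]` below the line
`t ↦ (w + νσ) - νt`, which meets the diagonal at `a` and vanishes at `b`. Integrating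
`n x^(n-1)` against these two bounds gives `a^n + a^n / ν`, which is the right-hand side.
-/

open intervalIntegral

theorem integral_natCast_mul_pow_pred (n : ℕ) (a b : ℝ) :
    ∫ x in a..b, (n : ℝ) * x ^ (n - 1) = b ^ n - a ^ n :=
  integral_eq_sub_of_hasDerivAt (fun x _ => hasDerivAt_pow n x)
    ((continuous_const.mul (continuous_pow _)).intervalIntegrable a b)

theorem integral_natCast_mul_sub_mul_pow_pred (n : ℕ) {ν : ℝ} (hν : ν ≠ 0) (c a b : ℝ) :
    ∫ t in a..b, (n : ℝ) * (c - ν * t) ^ (n - 1) = ((c - ν * a) ^ n - (c - ν * b) ^ n) / ν := by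
  rw [integral_comp_sub_mul (fun x => (n : ℝ) * x ^ (n - 1)) hν,
    integral_natCast_mul_pow_pred, smul_eq_mul, inv_mul_eq_div]

theorem integral_natCast_mul_pow_pred_mono_on (n : ℕ) {f g : ℝ → ℝ} {a b : ℝ} (hab : a ≤ b)
    (hf : Continuous f) (hg : Continuous g) (hf0 : ∀ t ∈ Set.Icc a b, 0 ≤ f t)
    (hfg : ∀ t ∈ Set.Icc a b, f t ≤ g t) :
    ∫ t in a..b, (n : ℝ) * f t ^ (n - 1) ≤ ∫ t in a..b, (n : ℝ) * g t ^ (n - 1) :=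
  integral_mono_on hab ((continuous_const.mul (hf.pow _)).intervalIntegrable a b)
    ((continuous_const.mul (hg.pow _)).intervalIntegrable a b) fun t ht =>
    mul_le_mul_of_nonneg_left (pow_le_pow_left₀ (hf0 t ht) (hfg t ht) _) n.cast_nonneg

/-- Analytic estimate at the heart of the proof of Proposition 3.4. -/
theorem stmt7 (n : ℕ) (hn : 1 ≤ n) (ν σ w : ℝ)
    (hν : 0 < ν) (hσ : 0 < σ) (hw : 0 ≤ w)
    (φ : ℝ → ℝ) (hcont : Continuous φ)
    (h0 : ∀ t ∈ Set.Icc (0 : ℝ) (σ + w / ν), 0 ≤ φ t)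
    (h1 : ∀ t ∈ Set.Icc (0 : ℝ) ((w + ν * σ) / (1 + ν)), φ t ≤ t)
    (h2 : ∀ t ∈ Set.Icc ((w + ν * σ) / (1 + ν)) (σ + w / ν),
        φ t ≤ w - ν * (t - σ)) :
    (∫ t in (0:ℝ)..(σ + w / ν), (n : ℝ) * (φ t) ^ (n - 1))
      ≤ (w + ν * σ) ^ n / (ν * (1 + ν) ^ (n - 1)) := by
  have hn0 : n ≠ 0 := Nat.one_le_iff_ne_zero.mp hn
  set c := w + ν * σ
  set a := c / (1 + ν)
  have hc : 0 ≤ c := by positivity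
  have ha0 : 0 ≤ a := by positivity
  have hab : a ≤ c / ν := div_le_div_of_nonneg_left hc hν (by linarith)
  have hca : c - ν * a = a := by simp only [a]; field_simp; ring
  have hcb : c - ν * (c / ν) = 0 := by field_simp; ring
  rw [show σ + w / ν = c / ν by field_simp; ring] at h0 h2 ⊢
  have hint (x y : ℝ) :
      IntervalIntegrable (fun t => (n : ℝ) * φ t ^ (n - 1)) MeasureTheory.volume x y :=
    (continuous_const.mul (hcont.pow _)).intervalIntegrable x y
  calc ∫ t in (0 : ℝ)..c / ν, (n : ℝ) * φ t ^ (n - 1)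
      = (∫ t in (0 : ℝ)..a, (n : ℝ) * φ t ^ (n - 1))
          + ∫ t in a..c / ν, (n : ℝ) * φ t ^ (n - 1) :=
        (integral_add_adjacent_intervals (hint 0 a) (hint a _)).symm
    _ ≤ (∫ t in (0 : ℝ)..a, (n : ℝ) * t ^ (n - 1))
          + ∫ t in a..c / ν, (n : ℝ) * (c - ν * t) ^ (n - 1) := by
        gcongr ?_ + ?_
        · exact integral_natCast_mul_pow_pred_mono_on n (g := fun t => t) ha0 hcont
            continuous_id (fun t ht => h0 t ⟨ht.1, ht.2.trans hab⟩) h1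
        · exact integral_natCast_mul_pow_pred_mono_on n (g := fun t => c - ν * t) hab hcont
            (by fun_prop) (fun t ht => h0 t ⟨ha0.trans ht.1, ht.2⟩)
            fun t ht => (h2 t ht).trans_eq (by ring)
    _ = a ^ n * (1 + ν) / ν := by
        rw [integral_natCast_mul_pow_pred, integral_natCast_mul_sub_mul_pow_pred n hν.ne', hca,
          hcb, zero_pow hn0]
        field_simp
        ring
    _ = c ^ n / (ν * (1 + ν) ^ (n - 1)) := by
        rw [div_pow, ← pow_sub_one_mul hn0 (1 + ν)]
        field_simp
end

section
/- Let d < e be natural numbers and let m ≥ 1 be a real number. Then there exists a unique real number y with y ≤ d such that ∏_{i=0}^{e−d−1} (e − y − i) = m · (e−d)!. -/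
open Finset

lemma prod_desc_fact (n : ℕ) : ∏ i ∈ Finset.range n, ((n:ℝ) - i) = Nat.factorial n := by
  induction n with
  | zero => simp
  | succ n ih =>
    rw [Finset.prod_range_succ']
    have h : ∀ i ∈ Finset.range n, ((↑(n+1) : ℝ) - ↑(i+1)) = (n:ℝ) - i := by
      intro i _; push_cast; ring
    rw [Finset.prod_congr rfl h, ih, Nat.factorial_succ]
    push_cast; ring

/-- Existence and uniqueness of `β_{d,e}(m)` (Definition 2.8). -/
theorem stmt10 (d e : ℕ) (hde : d < e) (m : ℝ) (hm : 1 ≤ m) :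
    ∃! y : ℝ, y ≤ (d : ℝ) ∧
      ∏ i ∈ Finset.range (e - d), ((e : ℝ) - y - (i : ℝ))
        = m * (Nat.factorial (e - d) : ℝ) := by
  set n := e - d with hn
  have hn0 : 0 < n := Nat.sub_pos_of_lt hde
  set f : ℝ → ℝ := fun y => ∏ i ∈ Finset.range n, ((e : ℝ) - y - (i : ℝ)) with hf
  have hcast : ((n:ℕ):ℝ) = (e:ℝ) - d := by
    rw [hn]; push_cast [Nat.cast_sub hde.le]; ring
  have hfac1 : (1:ℝ) ≤ (Nat.factorial n : ℝ) := by
    exact_mod_cast Nat.one_le_iff_ne_zero.mpr (Nat.factorial_ne_zero n)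
  -- each factor bound: for i < n and y ≤ d, (e:ℝ) - y - i ≥ d + 1 - y + (n-1-i) ≥ ...
  have hfactor : ∀ i ∈ Finset.range n, ∀ y : ℝ, (e:ℝ) - y - i ≥ (d:ℝ) + 1 - y := by
    intro i hi y
    rw [Finset.mem_range] at hi
    have : (i:ℝ) ≤ (n:ℝ) - 1 := by
      have : (i:ℝ) + 1 ≤ (n:ℝ) := by exact_mod_cast hi
      linarith
    linarith [hcast, this]
  -- f d = n!
  have hfd : f (d:ℝ) = Nat.factorial n := by
    rw [hf]
    have : ∀ i ∈ Finset.range n, (e:ℝ) - (d:ℝ) - i = (n:ℝ) - i := by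
      intro i _; rw [hcast]
    simp only
    rw [Finset.prod_congr rfl this, prod_desc_fact]
  -- strict antitonicity on Iic d
  have hanti : ∀ y1 y2 : ℝ, y1 < y2 → y2 ≤ (d:ℝ) → f y2 < f y1 := by
    intro y1 y2 h12 h2d
    rw [hf]
    apply Finset.prod_lt_prod_of_nonempty
    · intro i hi
      have := hfactor i hi y2
      linarith
    · intro i hi
      linarith
    · exact Finset.nonempty_range_iff.mpr hn0.ne'
  -- continuity
  have hcont : Continuous f := by
    rw [hf]
    apply continuous_finset_prod
    intro i _
    continuity
  -- existence via IVT on [a, d] with a = d + 1 - m * n!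
  set a : ℝ := (d:ℝ) + 1 - m * Nat.factorial n with ha
  have hc1 : (1:ℝ) ≤ m * Nat.factorial n := by nlinarith
  have had : a ≤ (d:ℝ) := by rw [ha]; linarith
  have hfa : m * Nat.factorial n ≤ f a := by
    have hstep : ∀ i ∈ Finset.range n, m * Nat.factorial n ≤ (e:ℝ) - a - i := by
      intro i hi
      have := hfactor i hi a
      rw [ha] at *
      linarith
    have h1 : (m * Nat.factorial n) ^ n ≤ f a := by
      rw [hf]
      calc (m * Nat.factorial n) ^ n
          = ∏ _i ∈ Finset.range n, (m * Nat.factorial n) := by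
            rw [Finset.prod_const, Finset.card_range]
        _ ≤ ∏ i ∈ Finset.range n, ((e:ℝ) - a - i) := by
            apply Finset.prod_le_prod
            · intro i _; linarith
            · exact hstep
    calc m * Nat.factorial n ≤ (m * Nat.factorial n) ^ n :=
          le_self_pow₀ hc1 hn0.ne'
      _ ≤ f a := h1
  have hmem : m * Nat.factorial n ∈ Set.Icc (f (d:ℝ)) (f a) := by
    constructor
    · rw [hfd]; nlinarith
    · exact hfa
  obtain ⟨y, hy, hfy⟩ := intermediate_value_Icc' had hcont.continuousOn hmem
  refine ⟨y, ⟨hy.2, hfy⟩, ?_⟩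
  intro y' ⟨hy'd, hfy'⟩
  by_contra hne
  have hfy2 : f y' = m * Nat.factorial n := hfy'
  rcases lt_or_gt_of_ne hne with h | h
  · have := hanti y' y h hy.2
    rw [hfy, hfy2] at this
    exact lt_irrefl _ this
  · have := hanti y y' h hy'd
    rw [hfy, hfy2] at this
    exact lt_irrefl _ this
end
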